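/- arXiv:2410.05880 — 3 statements merged into one kernel-verified Lean document; each statement's English description precedes it below -/
import Mathlib

section
/- Let g = ∇h_α(x) be the minimum-norm element of the Goldstein α-subdifferential ∂_α h(x) of an L-Lipschitz function h, and suppose ‖g‖ ≠ 0. Then h(x − (α/‖g‖)·g) ≤ h(x) − α‖g‖ (Goldstein's descent property). -/
/-!
By Rademacher's theorem `h` is differentiable almost everywhere, and by Fubini almost every line
parallel to the direction `u = -g / ‖g‖` meets the non-differentiability set in a null set. Take
such a line through a point `x + v` with `‖v‖ < ε`: its segment of length `α - ε` stays in the ball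
`B(x, α)`, where every gradient lies in `∂_α h(x)`, so the variational inequality for the
minimum-norm element `g` gives `⟪∇h(y), u⟫ ≤ -‖g‖` wherever the gradient exists. Since `h` is
Lipschitz on the line, it is the integral of its derivative there, and it drops by at least
`(α - ε)‖g‖`; letting `ε → 0` gives the claim.
-/

open MeasureTheory Filter Topology

/-- The Clarke subdifferential of `h` at `x`. -/
noncomputable def clarkeSubdiff {d : ℕ} (h : EuclideanSpace ℝ (Fin d) → ℝ)
    (x : EuclideanSpace ℝ (Fin d)) : Set (EuclideanSpace ℝ (Fin d)) :=
  convexHull ℝ {g | ∃ u : ℕ → EuclideanSpace ℝ (Fin d),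
    (∀ n, DifferentiableAt ℝ h (u n)) ∧ Tendsto u atTop (𝓝 x) ∧
    Tendsto (fun n => gradient h (u n)) atTop (𝓝 g)}

/-- The Goldstein `α`-subdifferential: `conv(∪_{y ∈ B(x,α)} ∂h(y))`. -/
noncomputable def goldsteinSubdiff {d : ℕ} (h : EuclideanSpace ℝ (Fin d) → ℝ) (α : ℝ)
    (x : EuclideanSpace ℝ (Fin d)) : Set (EuclideanSpace ℝ (Fin d)) :=
  convexHull ℝ (⋃ y ∈ Metric.closedBall x α, clarkeSubdiff h y)

open Set

theorem gradient_mem_clarkeSubdiff {d : ℕ} {h : EuclideanSpace ℝ (Fin d) → ℝ}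
    {x : EuclideanSpace ℝ (Fin d)} (hx : DifferentiableAt ℝ h x) :
    gradient h x ∈ clarkeSubdiff h x :=
  subset_convexHull ℝ _ ⟨fun _ => x, fun _ => hx, tendsto_const_nhds, tendsto_const_nhds⟩

theorem clarkeSubdiff_subset_goldsteinSubdiff {d : ℕ} {h : EuclideanSpace ℝ (Fin d) → ℝ}
    {α : ℝ} {x y : EuclideanSpace ℝ (Fin d)} (hy : y ∈ Metric.closedBall x α) :
    clarkeSubdiff h y ⊆ goldsteinSubdiff h α x :=
  (subset_biUnion_of_mem hy).trans (subset_convexHull ℝ _)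

theorem Convex.norm_sq_le_inner_of_isMinOn {F : Type*} [NormedAddCommGroup F]
    [InnerProductSpace ℝ F] {K : Set F} (hK : Convex ℝ K) {g w : F} (hg : g ∈ K)
    (hmin : IsMinOn (‖·‖) K g) (hw : w ∈ K) : ‖g‖ ^ 2 ≤ inner ℝ g w := by
  have : Nonempty K := ⟨⟨g, hg⟩⟩
  have hproj : ‖0 - g‖ = ⨅ w : K, ‖0 - (w : F)‖ :=
    le_antisymm (le_ciInf fun w => by simpa using hmin w.2)
      (ciInf_le ⟨0, by rintro _ ⟨w, rfl⟩; positivity⟩ (⟨g, hg⟩ : K))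
  have := (norm_eq_iInf_iff_real_inner_le_zero hK hg).1 hproj w hw
  rw [zero_sub, inner_neg_left, inner_sub_right, real_inner_self_eq_norm_sq] at this
  linarith

theorem LipschitzWith.sub_le_mul_of_ae_deriv_le {f : ℝ → ℝ} {K : NNReal} (hf : LipschitzWith K f)
    {a b c : ℝ} (hab : a ≤ b) (hderiv : ∀ᵐ t, t ∈ Icc a b → deriv f t ≤ c) :
    f b - f a ≤ c * (b - a) := by
  have hac := (hf.lipschitzOnWith (s := uIcc a b)).absolutelyContinuousOnInterval
  calc f b - f a = ∫ t in a..b, deriv f t := hac.integral_deriv_eq_sub.symm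
    _ ≤ ∫ _ in a..b, c :=
      intervalIntegral.integral_mono_ae_restrict hab hac.intervalIntegrable_deriv
        intervalIntegrable_const ((ae_restrict_iff' measurableSet_Icc).2 hderiv)
    _ = c * (b - a) := by rw [intervalIntegral.integral_const, smul_eq_mul, mul_comm]

theorem ae_ae_add_add_smul_of_ae {E : Type*} [NormedAddCommGroup E] [NormedSpace ℝ E]
    [MeasurableSpace E] [BorelSpace E] [SecondCountableTopology E] (μ : Measure E) [SFinite μ]
    [μ.IsAddLeftInvariant] {P : E → Prop} (hP : MeasurableSet {y | P y}) (hae : ∀ᵐ y ∂μ, P y)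
    (x u : E) : ∀ᵐ v ∂μ, ∀ᵐ t : ℝ, P (x + v + t • u) := by
  refine (Measure.ae_ae_comm ?_).1 (ae_of_all _ fun t => ?_)
  · exact hP.preimage (by fun_prop : Continuous fun p : ℝ × E => x + p.2 + p.1 • u).measurable
  · filter_upwards [(measurePreserving_add_left μ (x + t • u)).quasiMeasurePreserving.ae hae]
      with v hv
    rwa [add_right_comm]

variable {E : Type*} [NormedAddCommGroup E] [NormedSpace ℝ E] {h : E → ℝ} {K : NNReal}

theorem LipschitzWith.sub_le_mul_of_ae_differentiableAt_line (hh : LipschitzWith K h)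
    {y u : E} {s c : ℝ} (hs : 0 ≤ s) (hdiff : ∀ᵐ t : ℝ, DifferentiableAt ℝ h (y + t • u))
    (hc : ∀ t ∈ Icc 0 s, DifferentiableAt ℝ h (y + t • u) → fderiv ℝ h (y + t • u) u ≤ c) :
    h (y + s • u) - h y ≤ c * s := by
  have hline : LipschitzWith (K * ‖u‖₊) fun t : ℝ => h (y + t • u) :=
    hh.comp <| LipschitzWith.of_dist_le_mul fun a b => by
      simp [dist_eq_norm, ← sub_smul, norm_smul, mul_comm]
  simpa using hline.sub_le_mul_of_ae_deriv_le hs <| by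
    filter_upwards [hdiff] with t ht hts
    have hderiv : HasDerivAt (fun t : ℝ => y + t • u) u t := by
      simpa using ((hasDerivAt_id t).smul_const u).const_add y
    have hcomp : HasDerivAt (fun t : ℝ => h (y + t • u)) (fderiv ℝ h (y + t • u) u) t :=
      ht.hasFDerivAt.comp_hasDerivAt t hderiv
    exact hcomp.deriv ▸ hc t hts ht

theorem LipschitzWith.le_add_mul_of_fderiv_apply_le [FiniteDimensional ℝ E]
    (hh : LipschitzWith K h) {x u : E} (hu : ‖u‖ ≤ 1) {r c : ℝ} (hr : 0 < r)
    (hc : ∀ y ∈ Metric.closedBall x r, DifferentiableAt ℝ h y → fderiv ℝ h y u ≤ c) :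
    h (x + r • u) ≤ h x + c * r := by
  borelize E
  have hgood : ∀ᵐ v ∂(Measure.addHaar : Measure E), ∀ᵐ t : ℝ,
      DifferentiableAt ℝ h (x + v + t • u) :=
    ae_ae_add_add_smul_of_ae _ (measurableSet_of_differentiableAt ℝ h) hh.ae_differentiableAt x u
  have hshifted : ∀ ε ∈ Ioo 0 r, h (x + r • u) ≤ h x + c * (r - ε) + 3 * K * ε := by
    rintro ε ⟨hε, hεr⟩
    obtain ⟨v, hv, hvgood⟩ := Measure.exists_mem_of_measure_ne_zero_of_ae
      (Metric.measure_ball_pos _ 0 hε).ne' (ae_restrict_of_ae hgood)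
    rw [mem_ball_zero_iff] at hv
    have hseg := hh.sub_le_mul_of_ae_differentiableAt_line (sub_nonneg.2 hεr.le) hvgood
      fun t ht => hc _ <| by
        have htu : ‖t • u‖ ≤ r - ε := by
          rw [norm_smul, Real.norm_of_nonneg ht.1]
          exact (mul_le_of_le_one_right ht.1 hu).trans ht.2
        rw [Metric.mem_closedBall, dist_eq_norm, add_assoc, add_sub_cancel_left]
        linarith [norm_add_le v (t • u)]
    have hend : dist (x + r • u) (x + v + (r - ε) • u) ≤ 2 * ε := by
      have hεu : ‖ε • u‖ ≤ ε := by
        rw [norm_smul, Real.norm_of_nonneg hε.le]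
        exact mul_le_of_le_one_right hε.le hu
      rw [dist_eq_norm, show x + r • u - (x + v + (r - ε) • u) = ε • u - v by
        rw [sub_smul]; abel]
      linarith [_root_.norm_sub_le (ε • u) v]
    have hstart : dist (x + v) x ≤ ε := by simpa [dist_eq_norm] using hv.le
    have h1 : h (x + r • u) ≤ h (x + v + (r - ε) • u) + K * (2 * ε) :=
      (hh.le_add_mul _ _).trans (by gcongr)
    have h2 : h (x + v) ≤ h x + K * ε := (hh.le_add_mul _ _).trans (by gcongr)
    linarith
  have hlim : Tendsto (fun ε => h x + c * (r - ε) + 3 * K * ε) (𝓝[>] 0) (𝓝 (h x + c * r)) := by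
    refine tendsto_nhdsWithin_of_tendsto_nhds ?_
    convert (by fun_prop : Continuous fun ε : ℝ => h x + c * (r - ε) + 3 * K * ε).tendsto 0
      using 2
    simp
  exact ge_of_tendsto hlim (eventually_of_mem (Ioo_mem_nhdsGT hr) hshifted)

/-- Goldstein's descent property: stepping distance `α` against the minimum-norm element `g` of
the Goldstein `α`-subdifferential decreases the function value by at least `α‖g‖`. -/
theorem goldstein_descent (d : ℕ) (L α : ℝ) (hα : 0 < α)
    (h : EuclideanSpace ℝ (Fin d) → ℝ)
    (hLip : ∀ x y : EuclideanSpace ℝ (Fin d), |h x - h y| ≤ L * ‖x - y‖)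
    (x g : EuclideanSpace ℝ (Fin d))
    (hg : g ∈ goldsteinSubdiff h α x)
    (hmin : ∀ g' ∈ goldsteinSubdiff h α x, ‖g‖ ≤ ‖g'‖)
    (hg0 : ‖g‖ ≠ 0) :
    h (x - (α / ‖g‖) • g) ≤ h x - α * ‖g‖ := by
  have hlip : LipschitzWith L.toNNReal h := LipschitzWith.of_le_add_mul' L fun a b => by
    rw [dist_eq_norm]
    linarith [le_abs_self (h a - h b), hLip a b]
  set u := -(‖g‖⁻¹ • g) with hu_def
  have hu : ‖u‖ = 1 := by rw [norm_neg, norm_smul, norm_inv, norm_norm, inv_mul_cancel₀ hg0]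
  have hstep : x - (α / ‖g‖) • g = x + α • u := by
    rw [hu_def, smul_neg, smul_smul, ← sub_eq_add_neg, div_eq_mul_inv]
  rw [hstep]
  refine (hlip.le_add_mul_of_fderiv_apply_le (c := -‖g‖) hu.le hα fun y hy hdiff => ?_).trans_eq
    (by ring)
  have hgrad := clarkeSubdiff_subset_goldsteinSubdiff hy (gradient_mem_clarkeSubdiff hdiff)
  have hinner := (convex_convexHull ℝ _).norm_sq_le_inner_of_isMinOn hg hmin hgrad
  rw [← toDual_gradient, InnerProductSpace.toDual_apply_apply, hu_def, inner_neg_right,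
    real_inner_smul_right, real_inner_comm]
  calc -(‖g‖⁻¹ * inner ℝ g (gradient h y)) ≤ -(‖g‖⁻¹ * ‖g‖ ^ 2) := by gcongr
    _ = -‖g‖ := by field_simp
end

section
/- For an L-Lipschitz function h : ℝ^d → ℝ and λ > 0, the Lasry-Lions regularization h̃_λ := −M_λ(−M_{2λ}(h)) has the same set of global minimizers and the same infimum as h: inf h̃_λ = inf h and argmin h̃_λ = argmin h. -/
/-!
Write `g = M_{2λ}(h)` and `h̃ = h̃_λ`. Testing the outer infimum at `y = x` gives `g ≤ h̃`, and
`g(y) ≤ h(x) + ‖y − x‖²/(4λ)` gives `h̃ ≤ h`; as `inf g = inf h`, the sandwich `g ≤ h̃ ≤ h` already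
forces `inf h̃ = inf h`. For the minimizers, the Lipschitz bound shows that `g(x) > inf h` whenever
`h(x) > inf h`, so a minimizer of `h̃`, where `g ≤ h̃ ≤ inf h`, is a minimizer of `h`.
-/

/-- The Moreau envelope `M_μ(g)(x) = inf_y [g(y) + ‖y − x‖²/(2μ)]`. -/
noncomputable def moreauEnv {d : ℕ} (mu : ℝ) (h : EuclideanSpace ℝ (Fin d) → ℝ)
    (x : EuclideanSpace ℝ (Fin d)) : ℝ :=
  ⨅ y : EuclideanSpace ℝ (Fin d), (h y + ‖y - x‖ ^ 2 / (2 * mu))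

/-- The Lasry-Lions regularization `h̃_λ = −M_λ(−M_{2λ}(h))`. -/
noncomputable def lasryLions {d : ℕ} (lam : ℝ) (h : EuclideanSpace ℝ (Fin d) → ℝ)
    (x : EuclideanSpace ℝ (Fin d)) : ℝ :=
  -(moreauEnv lam (fun y => -(moreauEnv (2 * lam) h y)) x)

open Set

section Sandwich

variable {ι : Type*} [Nonempty ι] {f g h : ι → ℝ}

theorem iInf_eq_iInf_of_sandwich (hgf : g ≤ f) (hfh : f ≤ h)
    (hlow : ∀ m, (∀ z, m ≤ h z) → ∀ x, m ≤ g x) :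
    ⨅ x, f x = ⨅ x, h x := by
  by_cases hbdd : BddBelow (range h)
  · have hm : ∀ x, ⨅ z, h z ≤ f x := fun x => hlow _ (ciInf_le hbdd) x |>.trans (hgf x)
    exact le_antisymm (ciInf_mono ⟨_, forall_mem_range.mpr hm⟩ hfh) (le_ciInf hm)
  · have hf : ¬ BddBelow (range f) := fun ⟨c, hc⟩ =>
      hbdd ⟨c, forall_mem_range.mpr fun x => (hc (mem_range_self x)).trans (hfh x)⟩
    rw [Real.iInf_of_not_bddBelow hf, Real.iInf_of_not_bddBelow hbdd]

theorem setOf_isMin_eq_of_sandwich (hgf : g ≤ f) (hfh : f ≤ h)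
    (hlow : ∀ m, (∀ z, m ≤ h z) → ∀ x, m ≤ g x)
    (hstrict : ∀ m, (∀ z, m ≤ h z) → ∀ x, m < h x → m < g x) :
    {x | ∀ y, f x ≤ f y} = {x | ∀ y, h x ≤ h y} := by
  ext x
  constructor
  · intro hx y
    have hbdd : BddBelow (range h) := ⟨f x, forall_mem_range.mpr fun z => (hx z).trans (hfh z)⟩
    have hfx : f x ≤ ⨅ z, h z := le_ciInf fun z => (hx z).trans (hfh z)
    have hhx : h x ≤ ⨅ z, h z := not_lt.mp fun hlt =>
      ((hstrict _ (ciInf_le hbdd) x hlt).trans_le ((hgf x).trans hfx)).false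
    exact hhx.trans (ciInf_le hbdd y)
  · intro hx y
    exact (hfh x).trans ((hlow (h x) hx y).trans (hgf y))

end Sandwich

section Moreau

variable {d : ℕ} {mu L m : ℝ} {h : EuclideanSpace ℝ (Fin d) → ℝ}

theorem le_moreauEnv {c : ℝ} {x : EuclideanSpace ℝ (Fin d)}
    (hc : ∀ y, c ≤ h y + ‖y - x‖ ^ 2 / (2 * mu)) : c ≤ moreauEnv mu h x :=
  le_ciInf hc

theorem le_moreauEnv_of_forall_le (hmu : 0 ≤ mu) (hm : ∀ z, m ≤ h z)
    (x : EuclideanSpace ℝ (Fin d)) : m ≤ moreauEnv mu h x :=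
  le_moreauEnv fun y => le_add_of_le_of_nonneg (hm y) (by positivity)

variable (hmu : 0 < mu) (hLip : ∀ x y, |h x - h y| ≤ L * ‖x - y‖)
include hmu hLip

theorem moreauEnv_le_of_lipschitz (x y : EuclideanSpace ℝ (Fin d)) :
    moreauEnv mu h x ≤ h y + ‖y - x‖ ^ 2 / (2 * mu) := by
  refine ciInf_le ⟨h x - mu * L ^ 2 / 2, forall_mem_range.mpr fun z => ?_⟩ y
  have hz : h x - h z ≤ L * ‖z - x‖ := norm_sub_rev x z ▸ le_of_abs_le (hLip x z)
  have hsq : L * ‖z - x‖ - mu * L ^ 2 / 2 ≤ ‖z - x‖ ^ 2 / (2 * mu) := by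
    rw [le_div_iff₀ (by positivity)]
    nlinarith [sq_nonneg (‖z - x‖ - mu * L)]
  linarith

theorem lt_moreauEnv_of_lipschitz (hm : ∀ z, m ≤ h z) {x : EuclideanSpace ℝ (Fin d)}
    (hx : m < h x) : m < moreauEnv mu h x := by
  set δ := h x - m
  have hδ : 0 < δ := sub_pos.mpr hx
  -- `h ≥ (1 - s) m + s (h x − L‖· − x‖)`, and the quadratic term absorbs the slope `s L`
  set s := δ / (δ + L ^ 2 * mu)
  have hs : 0 < s := by positivity
  have hs1 : s ≤ 1 := div_le_one_of_le₀ (by nlinarith [sq_nonneg L]) (by positivity)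
  have hsδ : s * (L ^ 2 * mu) ≤ δ := by
    rw [div_mul_eq_mul_div, div_le_iff₀ (by positivity)]
    nlinarith [sq_nonneg L]
  calc m < m + s * δ - s ^ 2 * L ^ 2 * mu / 2 := by nlinarith
    _ ≤ moreauEnv mu h x := le_moreauEnv fun z => by
      have hz : h x - h z ≤ L * ‖z - x‖ := norm_sub_rev x z ▸ le_of_abs_le (hLip x z)
      have hsq : s * L * ‖z - x‖ - s ^ 2 * L ^ 2 * mu / 2 ≤ ‖z - x‖ ^ 2 / (2 * mu) := by
        rw [le_div_iff₀ (by positivity)]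
        nlinarith [sq_nonneg (‖z - x‖ - s * L * mu)]
      nlinarith [hm z]

end Moreau

section LasryLions

variable {d : ℕ} {lam L : ℝ} {h : EuclideanSpace ℝ (Fin d) → ℝ}
variable (hlam : 0 < lam) (hLip : ∀ x y, |h x - h y| ≤ L * ‖x - y‖)
include hlam hLip

theorem neg_le_neg_moreauEnv_add (x y : EuclideanSpace ℝ (Fin d)) :
    -h x ≤ -moreauEnv (2 * lam) h y + ‖y - x‖ ^ 2 / (2 * lam) := by
  have hg := moreauEnv_le_of_lipschitz (mu := 2 * lam) (by positivity) hLip y x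
  have hquad : ‖x - y‖ ^ 2 / (2 * (2 * lam)) ≤ ‖y - x‖ ^ 2 / (2 * lam) := by
    rw [norm_sub_rev]
    exact div_le_div_of_nonneg_left (by positivity) (by positivity) (by linarith)
  linarith

theorem lasryLions_le (x : EuclideanSpace ℝ (Fin d)) : lasryLions lam h x ≤ h x :=
  neg_le.mp (le_moreauEnv (neg_le_neg_moreauEnv_add hlam hLip x))

theorem moreauEnv_le_lasryLions (x : EuclideanSpace ℝ (Fin d)) :
    moreauEnv (2 * lam) h x ≤ lasryLions lam h x := by
  have hle := ciInf_le ⟨-h x, forall_mem_range.mpr (neg_le_neg_moreauEnv_add hlam hLip x)⟩ x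
  exact le_neg.mp (by simpa [moreauEnv] using hle)

end LasryLions

/-- The Lasry-Lions regularization of an `L`-Lipschitz function has the same infimum and the
same set of global minimizers as the function itself. -/
theorem lasryLions_inf_argmin (d : ℕ) (L lam : ℝ) (hlam : 0 < lam)
    (h : EuclideanSpace ℝ (Fin d) → ℝ)
    (hLip : ∀ x y : EuclideanSpace ℝ (Fin d), |h x - h y| ≤ L * ‖x - y‖) :
    (⨅ x : EuclideanSpace ℝ (Fin d), lasryLions lam h x)
      = (⨅ x : EuclideanSpace ℝ (Fin d), h x) ∧
    {x : EuclideanSpace ℝ (Fin d) | ∀ y, lasryLions lam h x ≤ lasryLions lam h y}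
      = {x : EuclideanSpace ℝ (Fin d) | ∀ y, h x ≤ h y} := by
  have hgf := moreauEnv_le_lasryLions hlam hLip
  have hfh := lasryLions_le hlam hLip
  have hlow : ∀ m, (∀ z, m ≤ h z) → ∀ x, m ≤ moreauEnv (2 * lam) h x :=
    fun m hm => le_moreauEnv_of_forall_le (by positivity) hm
  exact ⟨iInf_eq_iInf_of_sandwich hgf hfh hlow,
    setOf_isMin_eq_of_sandwich hgf hfh hlow
      fun m hm _ => lt_moreauEnv_of_lipschitz (by positivity) hLip hm⟩
end

section
/- If h : ℝ^d → ℝ is L-Lipschitz and x is a point where the Lasry-Lions regularization h̃_λ is differentiable with ‖∇h̃_λ(x)‖ ≤ β ≤ L, then x is a (3λL, β)-Goldstein stationary point of h. -/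
open Filter Topology

/-!
Let `z` attain the outer Moreau envelope `M_λ(-M_{2λ}h)(x)`. Then `h̃_λ` lies above the concave
quadratic `M_{2λ}h(z) - ‖z - ·‖² / (2λ)` and touches it at `x`, so `∇h̃_λ(x) = (z - x) / λ`; in
particular `‖z - x‖ ≤ λβ`, and the minimality of `z` says that `∇h̃_λ(x)` is a proximal
supergradient of `M_{2λ}h` at `z`. By Danskin's theorem it is then a convex combination of the
vectors `(z - w) / (2λ)`, `w` a proximal point of `h` at `z`. Each of these is a proximal
subgradient of `h` at `w`, hence a Clarke subgradient, and `‖w - z‖ ≤ 2λL`, so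
`‖w - x‖ ≤ 3λL`. That proximal subgradients of a Lipschitz function are Clarke subgradients is
seen by averaging its (Rademacher) gradients over small balls along a segment.
-/

open Set Metric MeasureTheory
open scoped RealInnerProductSpace NNReal

theorem IsCompact.convexHull {V : Type*} [NormedAddCommGroup V] [NormedSpace ℝ V]
    [FiniteDimensional ℝ V] {s : Set V} (hs : IsCompact s) : IsCompact (convexHull ℝ s) := by
  let combo (k : ℕ) (q : (Fin k → ℝ) × (Fin k → V)) : V := ∑ i, q.1 i • q.2 i
  have hcombo (k : ℕ) : Continuous (combo k) := by fun_prop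
  -- Carathéodory: `finrank + 1` points of `s` suffice.
  have key : _root_.convexHull ℝ s = ⋃ k ∈ Finset.range (Module.finrank ℝ V + 2),
      combo k '' (stdSimplex ℝ (Fin k) ×ˢ univ.pi fun _ => s) := by
    apply Subset.antisymm
    · intro x hx
      obtain ⟨ι, _, z, w, hzs, hz, hw0, hw1, rfl⟩ := eq_pos_convex_span_of_mem_convexHull hx
      have hcard : Fintype.card ι < Module.finrank ℝ V + 2 := by
        have := (vectorSpan ℝ (range z)).finrank_le
        have := hz.card_le_finrank_succ
        omega
      let e := Fintype.equivFin ι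
      refine mem_biUnion (Finset.mem_range.2 hcard)
        ⟨(w ∘ e.symm, z ∘ e.symm), ⟨⟨fun i => (hw0 _).le, ?_⟩, fun i _ => hzs ⟨_, rfl⟩⟩, ?_⟩
      · simpa [hw1] using e.symm.sum_comp w
      · simpa [combo] using e.symm.sum_comp (fun i => w i • z i)
    · refine iUnion₂_subset fun k _ => ?_
      rintro _ ⟨⟨w, z⟩, ⟨⟨hw0, hw1⟩, hz⟩, rfl⟩
      exact (convex_convexHull ℝ s).sum_mem (fun i _ => hw0 i) hw1
        fun i _ => subset_convexHull ℝ s (hz i (mem_univ i))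
  rw [key]
  exact (Finset.range _).isCompact_biUnion fun k _ =>
    ((isCompact_stdSimplex ℝ (Fin k)).prod (isCompact_univ_pi fun _ => hs)).image (hcombo k)

section InnerProductSpace

variable {F : Type*} [NormedAddCommGroup F] [InnerProductSpace ℝ F]

theorem mem_convexHull_of_inner_le [FiniteDimensional ℝ F] {P : Set F} (hP : IsCompact P) {x : F}
    (hx : ∀ e u, (∀ p ∈ P, ⟪p, e⟫ < u) → ⟪x, e⟫ ≤ u) : x ∈ convexHull ℝ P := by
  by_contra hxP
  obtain ⟨f, u, hfu, huf⟩ :=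
    geometric_hahn_banach_closed_point (convex_convexHull ℝ P) hP.convexHull.isClosed hxP
  obtain ⟨e, rfl⟩ := (InnerProductSpace.toDual ℝ F).surjective f
  simp only [InnerProductSpace.toDual_apply_apply] at hfu huf
  have := hx e u fun p hp => by
    rw [real_inner_comm]
    exact hfu p (subset_convexHull ℝ P hp)
  rw [real_inner_comm] at this
  linarith

theorem gradient_eq_of_forall_le_of_eq [CompleteSpace F] {f g : F → ℝ} {x s : F}
    (hf : DifferentiableAt ℝ f x) (hg : HasGradientAt g s x) (hgf : ∀ v, g v ≤ f v)
    (hfx : f x = g x) : gradient f x = s := by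
  have hmin : IsLocalMin (f - g) x :=
    Eventually.of_forall fun v => by simp only [Pi.sub_apply, hfx, sub_self]; linarith [hgf v]
  have := hmin.hasFDerivAt_eq_zero (hf.hasFDerivAt.sub hg.hasFDerivAt)
  rw [sub_eq_zero] at this
  rw [gradient, this, LinearIsometryEquiv.symm_apply_apply]

theorem LipschitzWith.norm_gradient_le [CompleteSpace F] {K : ℝ≥0} {h : F → ℝ}
    (hh : LipschitzWith K h) (y : F) : ‖gradient h y‖ ≤ K := by
  rw [gradient, LinearIsometryEquiv.norm_map]
  exact norm_fderiv_le_of_lipschitz ℝ hh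

/-- Proximal subgradient inequality, required globally rather than only near `w`. -/
def IsProximalSubgradient (h : F → ℝ) (w p : F) (C : ℝ) : Prop :=
  ∀ v, h w + ⟪p, v - w⟫ - C * ‖v - w‖ ^ 2 ≤ h v

end InnerProductSpace

section MeanValue

variable {V : Type*} [NormedAddCommGroup V] [NormedSpace ℝ V] [FiniteDimensional ℝ V]
  {K : ℝ≥0} {h : V → ℝ}

theorem LipschitzWith.ae_differentiableAt_add_const [MeasurableSpace V] [BorelSpace V]
    (hh : LipschitzWith K h) (μ : Measure V) [μ.IsAddHaarMeasure] (v : V) :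
    ∀ᵐ y ∂μ, DifferentiableAt ℝ h (y + v) :=
  (quasiMeasurePreserving_add_right μ v).ae hh.ae_differentiableAt

theorem LipschitzWith.hasDerivAt_setIntegral_comp_add_smul [MeasurableSpace V] [BorelSpace V]
    (hh : LipschitzWith K h) (μ : Measure V) [μ.IsAddHaarMeasure] {B : Set V} (hB : IsCompact B)
    (e : V) (s₀ : ℝ) :
    HasDerivAt (fun s => ∫ y in B, h (y + s • e) ∂μ)
      (∫ y in B, fderiv ℝ h (y + s₀ • e) e ∂μ) s₀ := by
  have hint (s : ℝ) : IntegrableOn (fun y => h (y + s • e)) B μ :=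
    (hh.continuous.comp (continuous_add_const _)).continuousOn.integrableOn_compact hB
  have hline (y : V) : HasDerivAt (fun s : ℝ => y + s • e) e s₀ := by
    simpa using ((hasDerivAt_id s₀).smul_const e).const_add y
  have hlip (y : V) : LipschitzWith (Real.nnabs (K * ‖e‖)) fun s : ℝ => h (y + s • e) := by
    refine LipschitzWith.of_dist_le_mul fun s t => ?_
    calc dist (h (y + s • e)) (h (y + t • e)) ≤ K * dist (y + s • e) (y + t • e) :=
          hh.dist_le_mul _ _
      _ = _ := by
          rw [dist_add_left, dist_eq_norm, ← sub_smul, norm_smul, Real.coe_nnabs,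
            abs_of_nonneg (by positivity), Real.dist_eq, Real.norm_eq_abs]
          ring
  refine (hasDerivAt_integral_of_dominated_loc_of_lip univ_mem
    (Eventually.of_forall fun s => (hint s).aestronglyMeasurable) (hint s₀)
    ((measurable_fderiv_apply_const ℝ h e).comp (measurable_add_const _)).aestronglyMeasurable
    (Eventually.of_forall fun y => (hlip y).lipschitzOnWith)
    (integrableOn_const hB.measure_lt_top.ne) ?_).2
  exact ae_restrict_of_ae <| (hh.ae_differentiableAt_add_const μ (s₀ • e)).mono
    fun y hy => hy.hasFDerivAt.comp_hasDerivAt s₀ (hline y)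

theorem LipschitzWith.setIntegral_fderiv_apply_le [MeasurableSpace V] [BorelSpace V]
    (hh : LipschitzWith K h) (μ : Measure V) [μ.IsAddHaarMeasure] {B : Set V} (hB : IsCompact B)
    {e v : V} {u : ℝ} (hu : ∀ y ∈ B, DifferentiableAt ℝ h (y + v) → fderiv ℝ h (y + v) e ≤ u) :
    ∫ y in B, fderiv ℝ h (y + v) e ∂μ ≤ u * μ.real B := by
  have hBfin : μ B ≠ ⊤ := hB.measure_lt_top.ne
  calc ∫ y in B, fderiv ℝ h (y + v) e ∂μ ≤ ∫ _ in B, u ∂μ := by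
        refine integral_mono_ae ?_ (integrableOn_const hBfin) ?_
        · refine Integrable.mono' (integrableOn_const (C := K * ‖e‖) hBfin)
            ((measurable_fderiv_apply_const ℝ h e).comp
              (measurable_add_const _)).aestronglyMeasurable (Eventually.of_forall fun y => ?_)
          exact ((fderiv ℝ h _).le_opNorm e).trans
            (mul_le_mul_of_nonneg_right (norm_fderiv_le_of_lipschitz ℝ hh) (norm_nonneg e))
        · filter_upwards [ae_restrict_mem hB.measurableSet,
            ae_restrict_of_ae (hh.ae_differentiableAt_add_const μ v)] with y hyB hy
          exact hu y hyB hy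
    _ = u * μ.real B := by rw [setIntegral_const, smul_eq_mul, mul_comm]

theorem LipschitzWith.abs_setIntegral_closedBall_sub_le [MeasurableSpace V] [BorelSpace V]
    (hh : LipschitzWith K h) (μ : Measure V) [IsFiniteMeasureOnCompacts μ] (w v : V) (r : ℝ) :
    |∫ y in closedBall w r, h (y + v) ∂μ - μ.real (closedBall w r) * h (w + v)| ≤
      K * r * μ.real (closedBall w r) := by
  have hfin : μ (closedBall w r) < ⊤ := (isCompact_closedBall w r).measure_lt_top
  have hint : IntegrableOn (fun y => h (y + v)) (closedBall w r) μ :=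
    (hh.continuous.comp (continuous_add_const _)).continuousOn.integrableOn_compact
      (isCompact_closedBall w r)
  rw [← smul_eq_mul, ← setIntegral_const, ← integral_sub hint (integrableOn_const hfin.ne),
    ← Real.norm_eq_abs]
  refine norm_setIntegral_le_of_norm_le_const hfin fun y hy => ?_
  calc ‖h (y + v) - h (w + v)‖ ≤ K * ‖(y + v) - (w + v)‖ := by
        simpa [dist_eq_norm] using hh.dist_le_mul (y + v) (w + v)
    _ ≤ K * r := by
        rw [add_sub_add_right_eq_sub]
        exact mul_le_mul_of_nonneg_left (mem_closedBall_iff_norm.1 hy) K.2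

/-- Averaging over the ball `closedBall w r` turns the a.e. bound on `fderiv h · e` into a bound
on the increment; the error `2 * K * r` comes from comparing the averages with `h` itself. -/
theorem LipschitzWith.sub_le_mul_add_of_fderiv_le (hh : LipschitzWith K h) {w e : V}
    {δ u τ r : ℝ} (hu : ∀ y ∈ ball w δ, DifferentiableAt ℝ h y → fderiv ℝ h y e ≤ u)
    (hτ : 0 ≤ τ) (hr : 0 < r) (hrτ : r + τ * ‖e‖ < δ) :
    h (w + τ • e) - h w ≤ u * τ + 2 * K * r := by
  borelize V
  let μ : Measure V := Measure.addHaar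
  let vol := μ.real (closedBall w r)
  have hvol : 0 < vol := ENNReal.toReal_pos (measure_closedBall_pos μ w hr).ne'
    (isCompact_closedBall w r).measure_lt_top.ne
  have hψ (s : ℝ) := hh.hasDerivAt_setIntegral_comp_add_smul μ (isCompact_closedBall w r) e s
  have hψ' {s : ℝ} (hs : s ∈ Icc 0 τ) :
      ∫ y in closedBall w r, fderiv ℝ h (y + s • e) e ∂μ ≤ u * vol := by
    refine hh.setIntegral_fderiv_apply_le μ (isCompact_closedBall w r) fun y hy => hu _ ?_
    rw [mem_ball, dist_eq_norm, add_sub_right_comm]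
    calc ‖y - w + s • e‖ ≤ ‖y - w‖ + ‖s • e‖ := norm_add_le _ _
      _ ≤ r + τ * ‖e‖ := by
          rw [norm_smul, Real.norm_of_nonneg hs.1]
          gcongr
          · exact mem_closedBall_iff_norm.1 hy
          · exact hs.2
      _ < δ := hrτ
  have hψτ := (convex_Icc 0 τ).image_sub_le_mul_sub_of_deriv_le
    (fun s _ => (hψ s).continuousAt.continuousWithinAt)
    (fun s _ => (hψ s).differentiableAt.differentiableWithinAt)
    (fun s hs => (hψ s).deriv ▸ hψ' (interior_subset hs)) 0 (left_mem_Icc.2 hτ) τ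
    (right_mem_Icc.2 hτ) hτ
  have h0 := abs_le.1 (hh.abs_setIntegral_closedBall_sub_le μ w ((0 : ℝ) • e) r)
  have hτ' := abs_le.1 (hh.abs_setIntegral_closedBall_sub_le μ w (τ • e) r)
  simp only [zero_smul, add_zero, sub_zero] at h0 hψτ
  have : vol * (h (w + τ • e) - h w) ≤ vol * (u * τ + 2 * K * r) := by nlinarith
  exact le_of_mul_le_mul_left this hvol

theorem LipschitzWith.sub_le_mul_of_fderiv_le (hh : LipschitzWith K h) {w e : V} {δ u τ : ℝ}
    (hu : ∀ y ∈ ball w δ, DifferentiableAt ℝ h y → fderiv ℝ h y e ≤ u)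
    (hτ : 0 ≤ τ) (hτδ : τ * ‖e‖ < δ) : h (w + τ • e) - h w ≤ u * τ := by
  have hlim : Tendsto (fun r : ℝ => u * τ + 2 * K * r) (𝓝[>] 0) (𝓝 (u * τ)) := by
    refine tendsto_nhdsWithin_of_tendsto_nhds ?_
    simpa using tendsto_const_nhds (x := u * τ) |>.add
      ((tendsto_id (x := 𝓝 (0 : ℝ))).const_mul (2 * (K : ℝ)))
  refine ge_of_tendsto hlim ?_
  filter_upwards [Ioo_mem_nhdsGT (sub_pos.2 hτδ)] with r hr
  exact hh.sub_le_mul_add_of_fderiv_le hu hτ hr.1 (by linarith [hr.2])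

end MeanValue

section Euclidean

variable {d : ℕ} {K : ℝ≥0} {h : EuclideanSpace ℝ (Fin d) → ℝ}

local notation "E" => EuclideanSpace ℝ (Fin d)

/-- The limits of gradients `∇h(u n)` along sequences `u n → x` of points of differentiability,
written as the fibre over `x` of the closure of the graph of `∇h`. -/
def limitingGradients (h : E → ℝ) (x : E) : Set E :=
  {g | (x, g) ∈ closure {q : E × E | DifferentiableAt ℝ h q.1 ∧ gradient h q.1 = q.2}}

theorem clarkeSubdiff_eq_convexHull_limitingGradients (h : E → ℝ) (x : E) :
    clarkeSubdiff h x = convexHull ℝ (limitingGradients h x) := by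
  unfold clarkeSubdiff limitingGradients
  congr 1
  ext g
  simp only [mem_ofPred_eq, mem_closure_iff_seq_limit, Prod.tendsto_iff]
  constructor
  · rintro ⟨u, hu, hux, hug⟩
    exact ⟨fun n => (u n, gradient h (u n)), fun n => ⟨hu n, rfl⟩, hux, hug⟩
  · rintro ⟨q, hq, hqx, hqg⟩
    exact ⟨fun n => (q n).1, fun n => (hq n).1, hqx, hqg.congr fun n => ((hq n).2).symm⟩

theorem LipschitzWith.limitingGradients_subset_closedBall (hh : LipschitzWith K h) (x : E) :
    limitingGradients h x ⊆ closedBall (0 : E) K := by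
  have hgraph : closure {q : E × E | DifferentiableAt ℝ h q.1 ∧ gradient h q.1 = q.2} ⊆
      {q | ‖q.2‖ ≤ K} :=
    closure_minimal (fun q hq => show ‖q.2‖ ≤ K from hq.2 ▸ hh.norm_gradient_le q.1)
      (isClosed_le continuous_snd.norm continuous_const)
  exact fun g hg => by simpa using hgraph hg

theorem LipschitzWith.isCompact_limitingGradients (hh : LipschitzWith K h) (x : E) :
    IsCompact (limitingGradients h x) :=
  (isCompact_closedBall (0 : E) K).of_isClosed_subset
    (isClosed_closure.preimage (Continuous.prodMk_right x))
    (hh.limitingGradients_subset_closedBall x)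

theorem LipschitzWith.clarkeSubdiff_subset_closedBall (hh : LipschitzWith K h) (x : E) :
    clarkeSubdiff h x ⊆ closedBall (0 : E) K := by
  rw [clarkeSubdiff_eq_convexHull_limitingGradients]
  exact convexHull_min (hh.limitingGradients_subset_closedBall x) (convex_closedBall (0 : E) K)

theorem LipschitzWith.eventually_inner_gradient_lt (hh : LipschitzWith K h) {w e : E} {u : ℝ}
    (hu : ∀ g ∈ limitingGradients h w, ⟪g, e⟫ < u) :
    ∀ᶠ y in 𝓝 w, DifferentiableAt ℝ h y → ⟪gradient h y, e⟫ < u := by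
  by_contra hne
  obtain ⟨y, hyw, hy⟩ := exists_seq_forall_of_frequently (not_eventually.1 hne)
  simp only [Classical.not_imp, not_lt] at hy
  obtain ⟨g, -, φ, hφ, hg⟩ := (isCompact_closedBall (0 : E) K).tendsto_subseq
    (x := fun n => gradient h (y n)) fun n => mem_closedBall_zero_iff.2 (hh.norm_gradient_le _)
  have hgw : g ∈ limitingGradients h w :=
    mem_closure_of_tendsto (b := atTop) ((hyw.comp hφ.tendsto_atTop).prodMk_nhds hg)
      (Eventually.of_forall fun n => ⟨(hy _).1, rfl⟩)
  have hlim : Tendsto (fun n => ⟪gradient h (y (φ n)), e⟫) atTop (𝓝 ⟪g, e⟫) :=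
    ((continuous_id.inner continuous_const).tendsto g).comp hg
  exact (hu g hgw).not_ge (ge_of_tendsto' hlim fun n => (hy (φ n)).2)

theorem IsProximalSubgradient.mem_clarkeSubdiff (hh : LipschitzWith K h) {w p : E} {C : ℝ}
    (hp : IsProximalSubgradient h w p C) : p ∈ clarkeSubdiff h w := by
  rw [clarkeSubdiff_eq_convexHull_limitingGradients]
  refine mem_convexHull_of_inner_le (hh.isCompact_limitingGradients w) fun e u he => ?_
  obtain ⟨δ, hδ, hu⟩ := Metric.eventually_nhds_iff_ball.1 (hh.eventually_inner_gradient_lt he)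
  have hincr {τ : ℝ} (hτ : 0 ≤ τ) (hτδ : τ * ‖e‖ < δ) : h (w + τ • e) - h w ≤ u * τ :=
    hh.sub_le_mul_of_fderiv_le (fun y hy hdy => by
      rw [← InnerProductSpace.toDual_symm_apply]; exact (hu y hy hdy).le) hτ hτδ
  have hlim : Tendsto (fun τ : ℝ => u + C * ‖e‖ ^ 2 * τ) (𝓝[>] 0) (𝓝 u) := by
    refine tendsto_nhdsWithin_of_tendsto_nhds ?_
    simpa using tendsto_const_nhds (x := u) |>.add
      ((tendsto_id (x := 𝓝 (0 : ℝ))).const_mul (C * ‖e‖ ^ 2))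
  have hsmall : ∀ᶠ τ : ℝ in 𝓝[>] 0, τ * ‖e‖ < δ :=
    tendsto_nhdsWithin_of_tendsto_nhds
      (by simpa using (tendsto_id (x := 𝓝 (0 : ℝ))).mul_const ‖e‖)
      |>.eventually (gt_mem_nhds hδ)
  refine ge_of_tendsto hlim ?_
  filter_upwards [hsmall, self_mem_nhdsWithin] with τ hτδ (hτ : 0 < τ)
  have hpτ := hp (w + τ • e)
  rw [add_sub_cancel_left, inner_smul_right, norm_smul, Real.norm_of_nonneg hτ.le] at hpτ
  have := hincr hτ.le hτδ
  have : τ * ⟪p, e⟫ ≤ τ * (u + C * ‖e‖ ^ 2 * τ) := by nlinarith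
  exact le_of_mul_le_mul_left this hτ

variable {μ : ℝ}

/-- The minimizers in the definition of `moreauEnv μ h y`. -/
def proxSet (μ : ℝ) (h : E → ℝ) (y : E) : Set E :=
  {w | ∀ z, h w + ‖w - y‖ ^ 2 / (2 * μ) ≤ h z + ‖z - y‖ ^ 2 / (2 * μ)}

theorem moreauEnv_eq_of_mem_proxSet {w y : E} (hw : w ∈ proxSet μ h y) :
    moreauEnv μ h y = h w + ‖w - y‖ ^ 2 / (2 * μ) :=
  le_antisymm (ciInf_le ⟨_, forall_mem_range.2 hw⟩ w) (le_ciInf hw)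

theorem LipschitzWith.proxSet_nonempty (hh : LipschitzWith K h) (hμ : 0 < μ) (y : E) :
    (proxSet μ h y).Nonempty := by
  have hcont : Continuous fun z => h z + ‖z - y‖ ^ 2 / (2 * μ) := by
    have := hh.continuous
    fun_prop
  refine hcont.exists_forall_le' y ?_
  filter_upwards [(isCompact_closedBall y (2 * μ * K)).compl_mem_cocompact] with z hz
  have hfar : 2 * μ * K ≤ ‖z - y‖ := by
    rw [mem_compl_iff, mem_closedBall, not_le, dist_eq_norm] at hz
    exact hz.le
  have hlip : h y ≤ h z + K * ‖z - y‖ := by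
    simpa [dist_eq_norm, norm_sub_rev] using hh.le_add_mul y z
  have hquad : K * ‖z - y‖ ≤ ‖z - y‖ ^ 2 / (2 * μ) := by
    rw [le_div_iff₀ (by positivity)]
    nlinarith [norm_nonneg (z - y)]
  rw [sub_self, norm_zero, sq, zero_mul, zero_div, add_zero]
  linarith

theorem LipschitzWith.moreauEnv_le (hh : LipschitzWith K h) (hμ : 0 < μ) (y z : E) :
    moreauEnv μ h y ≤ h z + ‖z - y‖ ^ 2 / (2 * μ) := by
  obtain ⟨w, hw⟩ := hh.proxSet_nonempty hμ y
  exact moreauEnv_eq_of_mem_proxSet hw ▸ hw z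

theorem lipschitzWith_moreauEnv (hh : LipschitzWith K h) (hμ : 0 < μ) :
    LipschitzWith K (moreauEnv μ h) := by
  refine LipschitzWith.of_le_add_mul K fun y y' => ?_
  obtain ⟨w, hw⟩ := hh.proxSet_nonempty hμ y'
  have hshift := hh.moreauEnv_le hμ y (w + (y - y'))
  have hlip := hh.le_add_mul (w + (y - y')) w
  rw [show w + (y - y') - y = w - y' by abel] at hshift
  rw [dist_eq_norm, add_sub_cancel_left, ← dist_eq_norm] at hlip
  rw [moreauEnv_eq_of_mem_proxSet hw]
  linarith

theorem isClosed_setOf_mem_proxSet (hcont : Continuous h) :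
    IsClosed {q : E × E | q.2 ∈ proxSet μ h q.1} := by
  have : {q : E × E | q.2 ∈ proxSet μ h q.1} = ⋂ z, {q : E × E |
      h q.2 + ‖q.2 - q.1‖ ^ 2 / (2 * μ) ≤ h z + ‖z - q.1‖ ^ 2 / (2 * μ)} := by
    ext q
    simp [proxSet]
  rw [this]
  exact isClosed_iInter fun z => isClosed_le (by fun_prop) (by fun_prop)

theorem isProximalSubgradient_of_mem_proxSet (hμ : 0 < μ) {w y : E} (hw : w ∈ proxSet μ h y) :
    IsProximalSubgradient h w (μ⁻¹ • (y - w)) (2 * μ)⁻¹ := by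
  intro v
  have hv := hw v
  rw [← sub_add_sub_cancel v w y, norm_add_sq_real, real_inner_comm,
    show w - y = -(y - w) by abel, inner_neg_left, norm_neg] at hv
  have : μ⁻¹ * ⟪y - w, v - w⟫ - (2 * μ)⁻¹ * ‖v - w‖ ^ 2 =
      -(‖v - w‖ ^ 2 / (2 * μ) + 2 * -⟪y - w, v - w⟫ / (2 * μ)) := by
    field_simp
    ring
  rw [add_div, add_div] at hv
  rw [real_inner_smul_left]
  linarith

theorem LipschitzWith.norm_sub_le_of_mem_proxSet (hh : LipschitzWith K h) (hμ : 0 < μ)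
    {w y : E} (hw : w ∈ proxSet μ h y) : ‖w - y‖ ≤ μ * K := by
  have := hh.clarkeSubdiff_subset_closedBall w
    ((isProximalSubgradient_of_mem_proxSet hμ hw).mem_clarkeSubdiff hh)
  rw [mem_closedBall_zero_iff, norm_smul, norm_inv, Real.norm_of_nonneg hμ.le, norm_sub_rev,
    inv_mul_le_iff₀ hμ] at this
  exact this

theorem LipschitzWith.isCompact_proxSet (hh : LipschitzWith K h) (hμ : 0 < μ) (y : E) :
    IsCompact (proxSet μ h y) :=
  (isCompact_closedBall y (μ * K)).of_isClosed_subset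
    ((isClosed_setOf_mem_proxSet hh.continuous).preimage (Continuous.prodMk_right y))
    fun _ hw => mem_closedBall_iff_norm.2 (hh.norm_sub_le_of_mem_proxSet hμ hw)

/-- Directional form of Danskin's theorem: compare `moreauEnv` at `z` and at `z - t • e` through
the prox points of `z - t • e`, and let `t → 0` along a subsequence on which they converge. -/
theorem LipschitzWith.exists_mem_proxSet_inner_le (hh : LipschitzWith K h) (hμ : 0 < μ)
    {z G : E} {C : ℝ} (hG : IsProximalSubgradient (fun y => -moreauEnv μ h y) z (-G) C) (e : E) :
    ∃ w ∈ proxSet μ h z, ⟪G, e⟫ ≤ ⟪μ⁻¹ • (z - w), e⟫ := by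
  have hkey {t : ℝ} (ht : 0 < t) {w : E} (hw : w ∈ proxSet μ h (z - t • e)) :
      ⟪G, e⟫ + μ⁻¹ * ⟪w - z, e⟫ ≤ t * ((C - (2 * μ)⁻¹) * ‖e‖ ^ 2) := by
    have hsup := hG (z - t • e)
    have hc := moreauEnv_eq_of_mem_proxSet hw
    have hz := hh.moreauEnv_le hμ z w
    rw [sub_sub_cancel_left, inner_neg_neg, inner_smul_right, norm_neg, norm_smul,
      Real.norm_of_nonneg ht.le] at hsup
    rw [sub_sub_eq_add_sub, add_sub_right_comm, norm_add_sq_real, inner_smul_right,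
      norm_smul, Real.norm_of_nonneg ht.le] at hc
    have : t * (⟪G, e⟫ + μ⁻¹ * ⟪w - z, e⟫) ≤ t * (t * ((C - (2 * μ)⁻¹) * ‖e‖ ^ 2)) := by
      field_simp
      field_simp at hc hz
      nlinarith
    exact le_of_mul_le_mul_left this ht
  choose w hw using fun n : ℕ => hh.proxSet_nonempty hμ (z - (1 / ((n : ℝ) + 1)) • e)
  have ht : Tendsto (fun n : ℕ => 1 / ((n : ℝ) + 1)) atTop (𝓝 0) :=
    tendsto_one_div_add_atTop_nhds_zero_nat
  have hc : Tendsto (fun n : ℕ => z - (1 / ((n : ℝ) + 1)) • e) atTop (𝓝 z) := by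
    simpa using tendsto_const_nhds.sub (ht.smul_const e)
  have hbdd (n : ℕ) : w n ∈ closedBall z (μ * K + ‖e‖) := by
    have h1 := hh.norm_sub_le_of_mem_proxSet hμ (hw n)
    have h2 : ‖(1 / ((n : ℝ) + 1)) • e‖ ≤ ‖e‖ := by
      rw [norm_smul]
      refine mul_le_of_le_one_left (norm_nonneg e) ?_
      rw [Real.norm_of_nonneg (by positivity)]
      exact div_le_one_of_le₀ (by simp) (by positivity)
    rw [mem_closedBall_iff_norm]
    calc ‖w n - z‖ = ‖(w n - (z - (1 / ((n : ℝ) + 1)) • e)) - (1 / ((n : ℝ) + 1)) • e‖ := by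
          congr 1; abel
      _ ≤ _ := (_root_.norm_sub_le _ _).trans (add_le_add h1 h2)
  obtain ⟨w₀, -, φ, hφ, hw₀⟩ := (isCompact_closedBall _ _).tendsto_subseq hbdd
  have hw₀z : w₀ ∈ proxSet μ h z :=
    (isClosed_setOf_mem_proxSet hh.continuous).mem_of_tendsto
      ((hc.comp hφ.tendsto_atTop).prodMk_nhds hw₀) (Eventually.of_forall fun n => hw (φ n))
  refine ⟨w₀, hw₀z, ?_⟩
  have hlim := le_of_tendsto_of_tendsto
    (tendsto_const_nhds.add (((hw₀.sub_const z).inner tendsto_const_nhds).const_mul μ⁻¹))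
    ((ht.comp hφ.tendsto_atTop).mul_const ((C - (2 * μ)⁻¹) * ‖e‖ ^ 2))
    (Eventually.of_forall fun n => hkey Nat.one_div_pos_of_nat (hw (φ n)))
  rw [zero_mul, ← sub_nonneg] at hlim
  rw [inner_smul_left, RCLike.conj_to_real, ← neg_sub w₀ z, inner_neg_left]
  linarith

/-- Danskin's theorem for the Moreau envelope: a proximal supergradient of `moreauEnv μ h` at `z`
is a convex combination of the gradients of the quadratics `‖w - ·‖ ^ 2 / (2 * μ)` active
at `z`. -/
theorem LipschitzWith.mem_convexHull_proxSet_image (hh : LipschitzWith K h) (hμ : 0 < μ)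
    {z G : E} {C : ℝ} (hG : IsProximalSubgradient (fun y => -moreauEnv μ h y) z (-G) C) :
    G ∈ convexHull ℝ ((fun w => μ⁻¹ • (z - w)) '' proxSet μ h z) := by
  refine mem_convexHull_of_inner_le ((hh.isCompact_proxSet hμ z).image (by fun_prop))
    fun e u hu => ?_
  obtain ⟨w, hw, hGw⟩ := hh.exists_mem_proxSet_inner_le hμ hG e
  exact hGw.trans (hu _ (mem_image_of_mem _ hw)).le

theorem LipschitzWith.gradient_lasryLions (hh : LipschitzWith K h) {lam : ℝ} (hlam : 0 < lam)
    {x zs : E} (hzs : zs ∈ proxSet lam (fun y => -moreauEnv (2 * lam) h y) x)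
    (hdiff : DifferentiableAt ℝ (lasryLions lam h) x) :
    gradient (lasryLions lam h) x = lam⁻¹ • (zs - x) := by
  have hM : LipschitzWith K fun y => -moreauEnv (2 * lam) h y :=
    (lipschitzWith_moreauEnv hh (by positivity)).neg
  have hq : HasGradientAt (fun v => moreauEnv (2 * lam) h zs - ‖zs - v‖ ^ 2 * (2 * lam)⁻¹)
      (lam⁻¹ • (zs - x)) x := by
    have hsq : HasFDerivAt (fun v => ‖zs - v‖ ^ 2) _ x :=
      ((hasFDerivAt_const zs x).sub (hasFDerivAt_id x)).norm_sq
    have := ((hsq.mul_const (2 * lam)⁻¹).const_sub (moreauEnv (2 * lam) h zs)).hasGradientAt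
    convert this using 1
    rw [eq_comm, LinearIsometryEquiv.symm_apply_eq]
    ext v
    simp only [mul_inv_rev, Pi.sub_apply, id_eq, map_sub, zero_sub, ContinuousLinearMap.comp_neg,
      ContinuousLinearMap.comp_id, neg_sub, neg_apply, smul_apply, sub_apply, coe_innerSL_apply,
      nsmul_eq_mul, Nat.cast_ofNat, smul_eq_mul, map_smul, InnerProductSpace.toDual_apply_apply]
    field_simp
    ring
  refine gradient_eq_of_forall_le_of_eq hdiff hq (fun v => ?_) ?_
  · have := hM.moreauEnv_le hlam v zs
    rw [div_eq_mul_inv] at this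
    unfold lasryLions
    linarith
  · unfold lasryLions
    rw [moreauEnv_eq_of_mem_proxSet hzs]
    ring

theorem LipschitzWith.gradient_lasryLions_mem_convexHull (hh : LipschitzWith K h) {lam : ℝ}
    (hlam : 0 < lam) {x z : E} (hz : z ∈ proxSet lam (fun y => -moreauEnv (2 * lam) h y) x)
    (hdiff : DifferentiableAt ℝ (lasryLions lam h) x) :
    gradient (lasryLions lam h) x ∈
      convexHull ℝ ((fun w => (2 * lam)⁻¹ • (z - w)) '' proxSet (2 * lam) h z) := by
  refine hh.mem_convexHull_proxSet_image (by positivity) (C := (2 * lam)⁻¹) ?_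
  convert isProximalSubgradient_of_mem_proxSet hlam hz using 1
  rw [hh.gradient_lasryLions hlam hz hdiff, ← smul_neg, neg_sub]

end Euclidean

/-- A `β`-stationary point of the Lasry-Lions regularization `h̃_λ` of an `L`-Lipschitz function
is a `(3λL, β)`-Goldstein stationary point of `h`. -/
theorem lasryLions_stationary (d : ℕ) (L lam β : ℝ) (hlam : 0 < lam)
    (h : EuclideanSpace ℝ (Fin d) → ℝ)
    (hLip : ∀ x y : EuclideanSpace ℝ (Fin d), |h x - h y| ≤ L * ‖x - y‖)
    (x : EuclideanSpace ℝ (Fin d))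
    (hdiff : DifferentiableAt ℝ (lasryLions lam h) x)
    (hgrad : ‖gradient (lasryLions lam h) x‖ ≤ β) (hβL : β ≤ L) :
    ∃ g ∈ goldsteinSubdiff h (3 * lam * L) x, ‖g‖ ≤ β := by
  have hL : (L.toNNReal : ℝ) = L := Real.coe_toNNReal L ((norm_nonneg _).trans (hgrad.trans hβL))
  have hh : LipschitzWith L.toNNReal h :=
    LipschitzWith.of_dist_le' fun x y => by simpa [Real.dist_eq, dist_eq_norm] using hLip x y
  obtain ⟨z, hz⟩ : (proxSet lam (fun y => -moreauEnv (2 * lam) h y) x).Nonempty :=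
    (lipschitzWith_moreauEnv hh (by positivity)).neg.proxSet_nonempty hlam x
  have hzx : ‖z - x‖ ≤ lam * β := by
    have := hgrad
    rw [hh.gradient_lasryLions hlam hz hdiff, norm_smul, norm_inv, Real.norm_of_nonneg hlam.le,
      inv_mul_le_iff₀ hlam] at this
    exact this
  refine ⟨_, convexHull_mono ?_ (hh.gradient_lasryLions_mem_convexHull hlam hz hdiff), hgrad⟩
  rintro _ ⟨w, hw, rfl⟩
  refine mem_biUnion (x := w) ?_
    ((isProximalSubgradient_of_mem_proxSet (by positivity) hw).mem_clarkeSubdiff hh)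
  have hwz := hh.norm_sub_le_of_mem_proxSet (by positivity) hw
  rw [hL] at hwz
  rw [mem_closedBall_iff_norm]
  calc ‖w - x‖ ≤ ‖w - z‖ + ‖z - x‖ := norm_sub_le_norm_sub_add_norm_sub _ _ _
    _ ≤ 2 * lam * L + lam * L := add_le_add hwz (hzx.trans (by gcongr))
    _ = 3 * lam * L := by ring
end
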